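/- Assume: (i) for every a ∈ (0,1] there exist an N-node strategy ν_a with PA_N(ν_a) ≥ a and MSE_N(ν_a) = c_η^N(a), and a 2-node strategy κ_a with PA_2(κ_a) ≥ a and MSE_2(κ_a) = c_η^2(a); (ii) best responses exist in both the N-node and 2-node games. Then the sets of equilibrium performance pairs coincide: { (MSE_N(ν), PA_N(ν)) : ν a best response among N-node strategies } = { (MSE_2(κ), PA_2(κ)) : κ a best response among 2-node strategies }. -/

import Mathlib

open MeasureTheory ProbabilityTheory

noncomputable section

def midN (N : ℕ) (p : ℝ × (Fin (N-1) → ℝ)) : ℝ :=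
  (max p.1 (⨆ i, p.2 i) + min p.1 (⨅ i, p.2 i)) / 2

def accN (N : ℕ) (η Δ : ℝ) : Set (ℝ × (Fin (N-1) → ℝ)) :=
  {p | max p.1 (⨆ i, p.2 i) - min p.1 (⨅ i, p.2 i) ≤ η * Δ}

def PA_N (N : ℕ) (η Δ : ℝ) (μ : Measure ℝ) (ν : Measure (Fin (N-1) → ℝ)) : ℝ :=
  ((μ.prod ν) (accN N η Δ)).toReal

def MSE_N (N : ℕ) (η Δ : ℝ) (μ : Measure ℝ) (ν : Measure (Fin (N-1) → ℝ)) : ℝ :=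
  ∫ p, (midN N p) ^ 2 ∂((μ.prod ν)[|accN N η Δ])

def mid2 (p : ℝ × ℝ) : ℝ := (max p.1 p.2 + min p.1 p.2) / 2

def acc2 (η Δ : ℝ) : Set (ℝ × ℝ) := {p | max p.1 p.2 - min p.1 p.2 ≤ η * Δ}

def PA_2 (η Δ : ℝ) (μ κ : Measure ℝ) : ℝ := ((μ.prod κ) (acc2 η Δ)).toReal

def MSE_2 (η Δ : ℝ) (μ κ : Measure ℝ) : ℝ :=
  ∫ p, (mid2 p) ^ 2 ∂((μ.prod κ)[|acc2 η Δ])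

def cN (N : ℕ) (η Δ : ℝ) (μ : Measure ℝ) (α : ℝ) : ℝ :=
  sSup {r | ∃ ν : Measure (Fin (N-1) → ℝ), IsProbabilityMeasure ν ∧
    α ≤ PA_N N η Δ μ ν ∧ r = MSE_N N η Δ μ ν}

def c2 (η Δ : ℝ) (μ : Measure ℝ) (α : ℝ) : ℝ :=
  sSup {r | ∃ κ : Measure ℝ, IsProbabilityMeasure κ ∧
    α ≤ PA_2 η Δ μ κ ∧ r = MSE_2 η Δ μ κ}

def IsBestResponseN (N : ℕ) (η Δ : ℝ) (μ : Measure ℝ) (QAD : ℝ → ℝ → ℝ)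
    (ν : Measure (Fin (N-1) → ℝ)) : Prop :=
  IsProbabilityMeasure ν ∧ 0 < PA_N N η Δ μ ν ∧
    ∀ ν' : Measure (Fin (N-1) → ℝ), IsProbabilityMeasure ν' → 0 < PA_N N η Δ μ ν' →
      QAD (MSE_N N η Δ μ ν') (PA_N N η Δ μ ν') ≤ QAD (MSE_N N η Δ μ ν) (PA_N N η Δ μ ν)

def IsBestResponse2 (η Δ : ℝ) (μ : Measure ℝ) (QAD : ℝ → ℝ → ℝ) (κ : Measure ℝ) : Prop :=
  IsProbabilityMeasure κ ∧ 0 < PA_2 η Δ μ κ ∧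
    ∀ κ' : Measure ℝ, IsProbabilityMeasure κ' → 0 < PA_2 η Δ μ κ' →
      QAD (MSE_2 η Δ μ κ') (PA_2 η Δ μ κ') ≤ QAD (MSE_2 η Δ μ κ) (PA_2 η Δ μ κ)

/-!
An N-node strategy in which all N − 1 adversaries repeat one sample of a 2-node strategy κ has
the same acceptance event and midpoint as κ. Conversely, an N-node strategy can be collapsed to a
single report, a function of the adversarial maximum M and minimum m, with the same acceptance
event (up to a null set, because the honest value lies in [−Δ, Δ] and η ≥ 2) and an accepted
midpoint at least as far from 0. So every 2-node (PA, MSE) pair is an N-node pair and every N-node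
pair is weakly dominated in MSE by a 2-node pair with the same PA. As Q_AD is strictly increasing
in MSE, best responses of the two games produce the same pairs.
-/

theorem setOf_maximizer_values_eq {S T α β γ : Type*} [LinearOrder α] [Preorder γ]
    {F : α → β → γ} (hF : ∀ b, StrictMono (F · b)) {s : Set S} {t : Set T}
    {u : S → α} {p : S → β} {v : T → α} {q : T → β}
    (embed : ∀ y ∈ t, ∃ x ∈ s, u x = v y ∧ p x = q y)
    (dominate : ∀ x ∈ s, ∃ y ∈ t, u x ≤ v y ∧ q y = p x) :
    {z | ∃ x, (x ∈ s ∧ ∀ x' ∈ s, F (u x') (p x') ≤ F (u x) (p x)) ∧ z = (u x, p x)} =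
      {z | ∃ y, (y ∈ t ∧ ∀ y' ∈ t, F (v y') (q y') ≤ F (v y) (q y)) ∧ z = (v y, q y)} := by
  ext z
  constructor
  · rintro ⟨x, ⟨hx, hmax⟩, rfl⟩
    obtain ⟨y, hy, hle, hq⟩ := dominate x hx
    have hu : u x = v y := by
      refine le_antisymm hle ?_
      obtain ⟨x', hx', hu', hp'⟩ := embed y hy
      simpa only [hu', hp', hq, (hF _).le_iff_le] using hmax x' hx'
    refine ⟨y, ⟨hy, fun y' hy' => ?_⟩, by rw [hu, hq]⟩
    obtain ⟨x', hx', hu', hp'⟩ := embed y' hy'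
    simpa only [hu', hp', hu, hq] using hmax x' hx'
  · rintro ⟨y, ⟨hy, hmax⟩, rfl⟩
    obtain ⟨x, hx, hu, hp⟩ := embed y hy
    refine ⟨x, ⟨hx, fun x' hx' => ?_⟩, by rw [hu, hp]⟩
    obtain ⟨y', hy', hle, hq'⟩ := dominate x' hx'
    calc F (u x') (p x') ≤ F (v y') (q y') := hq' ▸ (hF _).monotone hle
      _ ≤ F (v y) (q y) := hmax y' hy'
      _ = F (u x) (p x) := by rw [hu, hp]

section PushForward

variable {α β : Type*} [MeasurableSpace α] [MeasurableSpace β] {m : Measure α} {G : α → β}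
  {S : Set β} {A : Set α}

lemma cond_map_eq_map_cond (hG : Measurable G) (hS : MeasurableSet S)
    (hA : G ⁻¹' S =ᵐ[m] A) : (m.map G)[|S] = (m[|A]).map G := by
  rw [ProbabilityTheory.cond, ProbabilityTheory.cond, Measure.map_apply hG hS,
    Measure.restrict_map hG hS, Measure.map_smul, measure_congr hA, Measure.restrict_congr_set hA]

lemma prod_map_right {γ : Type*} [MeasurableSpace γ] (μ : Measure α) [SFinite μ] (ν : Measure β)
    [SFinite ν] {f : β → γ} (hf : Measurable f) :
    μ.prod (ν.map f) = (μ.prod ν).map (Prod.map id f) := by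
  simpa only [Measure.map_id] using Measure.map_prod_map μ ν measurable_id hf

end PushForward

section Measurability

variable {N : ℕ} {η Δ : ℝ}

lemma measurable_iSup_apply : Measurable fun x : Fin (N - 1) → ℝ => ⨆ i, x i :=
  Measurable.iSup fun i => measurable_pi_apply i

lemma measurable_iInf_apply : Measurable fun x : Fin (N - 1) → ℝ => ⨅ i, x i :=
  Measurable.iInf fun i => measurable_pi_apply i

lemma measurable_midN : Measurable (midN N) :=
  ((measurable_fst.max (measurable_iSup_apply.comp measurable_snd)).add
    (measurable_fst.min (measurable_iInf_apply.comp measurable_snd))).div_const 2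

lemma measurableSet_accN : MeasurableSet (accN N η Δ) :=
  measurableSet_le ((measurable_fst.max (measurable_iSup_apply.comp measurable_snd)).sub
    (measurable_fst.min (measurable_iInf_apply.comp measurable_snd))) measurable_const

lemma measurable_mid2 : Measurable mid2 := by
  unfold mid2; fun_prop

lemma measurableSet_acc2 : MeasurableSet (acc2 η Δ) :=
  measurableSet_le ((measurable_fst.max measurable_snd).sub (measurable_fst.min measurable_snd))
    measurable_const

end Measurability

section ConstStrategy

variable {N : ℕ} {η Δ : ℝ} {μ : Measure ℝ} [SFinite μ] [Nonempty (Fin (N - 1))]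
  (κ : Measure ℝ) [SFinite κ]

lemma preimage_accN_const :
    Prod.map id (Function.const (Fin (N - 1))) ⁻¹' accN N η Δ = acc2 η Δ := by
  ext p
  simp [accN, acc2]

lemma PA_N_map_const : PA_N N η Δ μ (κ.map (Function.const _)) = PA_2 η Δ μ κ := by
  rw [PA_N, PA_2, prod_map_right μ κ (by fun_prop),
    Measure.map_apply (measurable_id.prodMap (by fun_prop)) measurableSet_accN,
    preimage_accN_const]

lemma MSE_N_map_const : MSE_N N η Δ μ (κ.map (Function.const _)) = MSE_2 η Δ μ κ := by
  have hG : Measurable (Prod.map id (Function.const (Fin (N - 1))) : ℝ × ℝ → _) :=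
    measurable_id.prodMap (by fun_prop)
  rw [MSE_N, MSE_2, prod_map_right μ κ (by fun_prop),
    cond_map_eq_map_cond hG measurableSet_accN preimage_accN_const.eventuallyEq,
    integral_map hG.aemeasurable (measurable_midN.pow_const 2).aestronglyMeasurable]
  simp [midN, mid2]

end ConstStrategy

/-- Replaces adversarial reports with maximum `M` and minimum `m` by one report: the extreme on the
side of the sign of `M + m`, which pushes the accepted midpoint away from 0, or, when the spread
already exceeds `ηΔ`, a point that every honest value in `[-Δ, Δ]` rejects. -/
def collapseReport (η Δ M m : ℝ) : ℝ :=
  if M - m ≤ η * Δ then (if 0 ≤ M + m then M else m) else (η + 2) * Δ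

section Pointwise

variable {η Δ n M m : ℝ}

lemma accept_iff_collapseReport (hΔ : 0 < Δ) (hη : 2 ≤ η) (hn : n ∈ Set.Icc (-Δ) Δ)
    (hmM : m ≤ M) :
    max n M - min n m ≤ η * Δ ↔
      max n (collapseReport η Δ M m) - min n (collapseReport η Δ M m) ≤ η * Δ := by
  obtain ⟨hn₁, hn₂⟩ := hn
  have : 2 * Δ ≤ η * Δ := by nlinarith
  unfold collapseReport
  split_ifs <;>
  rcases max_cases n M with ⟨h₁, _⟩ | ⟨h₁, _⟩ <;>
  rcases min_cases n m with ⟨h₂, _⟩ | ⟨h₂, _⟩ <;>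
  simp only [h₁, h₂, max_def, min_def] <;> split_ifs <;> constructor <;> intro <;> linarith

lemma sq_mid_le_sq_mid_collapseReport (hn : n ∈ Set.Icc (-Δ) Δ)
    (hmM : m ≤ M) (hacc : max n M - min n m ≤ η * Δ) :
    ((max n M + min n m) / 2) ^ 2 ≤
      ((max n (collapseReport η Δ M m) + min n (collapseReport η Δ M m)) / 2) ^ 2 := by
  obtain ⟨hn₁, hn₂⟩ := hn
  unfold collapseReport
  split_ifs <;>
  rcases max_cases n M with ⟨h₁, _⟩ | ⟨h₁, _⟩ <;>
  rcases min_cases n m with ⟨h₂, _⟩ | ⟨h₂, _⟩ <;>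
  simp only [h₁, h₂, max_def, min_def] at hacc ⊢ <;> split_ifs <;> nlinarith

lemma sq_mid2_le (hn : n ∈ Set.Icc (-Δ) Δ) {t : ℝ} (hacc : max n t - min n t ≤ η * Δ) :
    mid2 (n, t) ^ 2 ≤ ((1 + η) * Δ) ^ 2 := by
  obtain ⟨hn₁, hn₂⟩ := hn
  unfold mid2
  apply sq_le_sq' <;>
  rcases max_cases n t with ⟨h₁, _⟩ | ⟨h₁, _⟩ <;>
  rcases min_cases n t with ⟨h₂, _⟩ | ⟨h₂, _⟩ <;>
  simp only [h₁, h₂] at hacc ⊢ <;> linarith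

end Pointwise

def collapse (N : ℕ) (η Δ : ℝ) (x : Fin (N - 1) → ℝ) : ℝ :=
  collapseReport η Δ (⨆ i, x i) (⨅ i, x i)

section Collapse

variable {N : ℕ} {η Δ : ℝ} {μ : Measure ℝ}

lemma measurable_collapse : Measurable (collapse N η Δ) :=
  Measurable.ite (measurableSet_le (measurable_iSup_apply.sub measurable_iInf_apply)
    measurable_const) (Measurable.ite (measurableSet_le measurable_const
      (measurable_iSup_apply.add measurable_iInf_apply)) measurable_iSup_apply
        measurable_iInf_apply) measurable_const

variable [Nonempty (Fin (N - 1))]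

lemma iInf_le_iSup_apply (x : Fin (N - 1) → ℝ) : ⨅ i, x i ≤ ⨆ i, x i :=
  ciInf_le_ciSup (Set.finite_range x).bddBelow (Set.finite_range x).bddAbove

variable {ν : Measure (Fin (N - 1) → ℝ)}

lemma preimage_acc2_collapse_ae_eq (hΔ : 0 < Δ) (hη : 2 ≤ η)
    (hμ : ∀ᵐ n ∂μ, n ∈ Set.Icc (-Δ) Δ) :
    Prod.map id (collapse N η Δ) ⁻¹' acc2 η Δ =ᵐ[μ.prod ν] accN N η Δ := by
  refine Filter.eventuallyEq_set.2 ?_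
  filter_upwards [Measure.quasiMeasurePreserving_fst.ae hμ] with p hn
  exact (accept_iff_collapseReport hΔ hη hn (iInf_le_iSup_apply p.2)).symm

variable [SFinite μ] [SFinite ν]

lemma PA_2_map_collapse (hΔ : 0 < Δ) (hη : 2 ≤ η) (hμ : ∀ᵐ n ∂μ, n ∈ Set.Icc (-Δ) Δ) :
    PA_2 η Δ μ (ν.map (collapse N η Δ)) = PA_N N η Δ μ ν := by
  rw [PA_2, PA_N, prod_map_right μ ν measurable_collapse,
    Measure.map_apply (measurable_id.prodMap measurable_collapse) measurableSet_acc2,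
    measure_congr (preimage_acc2_collapse_ae_eq hΔ hη hμ)]

lemma MSE_N_le_MSE_2_map_collapse (hΔ : 0 < Δ) (hη : 2 ≤ η)
    (hμ : ∀ᵐ n ∂μ, n ∈ Set.Icc (-Δ) Δ) :
    MSE_N N η Δ μ ν ≤ MSE_2 η Δ μ (ν.map (collapse N η Δ)) := by
  have hG : Measurable (Prod.map id (collapse N η Δ) : ℝ × _ → ℝ × ℝ) :=
    measurable_id.prodMap measurable_collapse
  rw [MSE_N, MSE_2, prod_map_right μ ν measurable_collapse,
    cond_map_eq_map_cond hG measurableSet_acc2 (preimage_acc2_collapse_ae_eq hΔ hη hμ),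
    integral_map hG.aemeasurable (measurable_mid2.pow_const 2).aestronglyMeasurable]
  have hgood : ∀ᵐ p ∂(μ.prod ν)[|accN N η Δ], p ∈ accN N η Δ ∧ p.1 ∈ Set.Icc (-Δ) Δ :=
    (ae_cond_mem measurableSet_accN).and
      (cond_absolutelyContinuous.ae_le (Measure.quasiMeasurePreserving_fst.ae hμ))
  refine integral_mono_of_nonneg (.of_forall fun _ => sq_nonneg _) ?_ ?_
  · refine .of_bound ((measurable_mid2.comp hG).pow_const 2).aestronglyMeasurable
      (((1 + η) * Δ) ^ 2) ?_
    filter_upwards [hgood] with p ⟨hacc, hn⟩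
    rw [Real.norm_of_nonneg (sq_nonneg _)]
    exact sq_mid2_le hn ((accept_iff_collapseReport hΔ hη hn (iInf_le_iSup_apply p.2)).1 hacc)
  · filter_upwards [hgood] with p ⟨hacc, hn⟩
    exact sq_mid_le_sq_mid_collapseReport hn (iInf_le_iSup_apply p.2) hacc

end Collapse

theorem stmt13_general {N : ℕ} (hN : 2 ≤ N) {η Δ : ℝ} (hΔ : 0 < Δ) (hη : 2 ≤ η)
    (μ : Measure ℝ) [IsProbabilityMeasure μ] (hμ : μ (Set.Icc (-Δ) Δ) = 1)
    (QAD : ℝ → ℝ → ℝ)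
    (hQ1 : ∀ y : ℝ, StrictMono fun x => QAD x y) :
    {p : ℝ × ℝ | ∃ ν : Measure (Fin (N-1) → ℝ), IsBestResponseN N η Δ μ QAD ν ∧
        p = (MSE_N N η Δ μ ν, PA_N N η Δ μ ν)} =
      {p : ℝ × ℝ | ∃ κ : Measure ℝ, IsBestResponse2 η Δ μ QAD κ ∧
        p = (MSE_2 η Δ μ κ, PA_2 η Δ μ κ)} := by
  have : Nonempty (Fin (N - 1)) := ⟨⟨0, by omega⟩⟩
  have hμ' : ∀ᵐ n ∂μ, n ∈ Set.Icc (-Δ) Δ :=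
    (ae_mem_iff_measure_eq measurableSet_Icc.nullMeasurableSet).2 (by rw [hμ, measure_univ])
  have embed (κ : Measure ℝ) (hκ : IsProbabilityMeasure κ ∧ 0 < PA_2 η Δ μ κ) :
      ∃ ν : Measure (Fin (N - 1) → ℝ), (IsProbabilityMeasure ν ∧ 0 < PA_N N η Δ μ ν) ∧
        MSE_N N η Δ μ ν = MSE_2 η Δ μ κ ∧ PA_N N η Δ μ ν = PA_2 η Δ μ κ := by
    obtain ⟨_, hpos⟩ := hκ
    have hconst : Measurable (Function.const (Fin (N - 1)) : ℝ → _) := by fun_prop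
    exact ⟨κ.map (Function.const _), ⟨Measure.isProbabilityMeasure_map hconst.aemeasurable,
      by rwa [PA_N_map_const]⟩, MSE_N_map_const κ, PA_N_map_const κ⟩
  have dominate (ν : Measure (Fin (N - 1) → ℝ))
      (hν : IsProbabilityMeasure ν ∧ 0 < PA_N N η Δ μ ν) :
      ∃ κ : Measure ℝ, (IsProbabilityMeasure κ ∧ 0 < PA_2 η Δ μ κ) ∧
        MSE_N N η Δ μ ν ≤ MSE_2 η Δ μ κ ∧ PA_2 η Δ μ κ = PA_N N η Δ μ ν := by
    obtain ⟨_, hpos⟩ := hν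
    exact ⟨ν.map (collapse N η Δ),
      ⟨Measure.isProbabilityMeasure_map measurable_collapse.aemeasurable,
        by rwa [PA_2_map_collapse hΔ hη hμ']⟩,
      MSE_N_le_MSE_2_map_collapse hΔ hη hμ', PA_2_map_collapse hΔ hη hμ'⟩
  simpa only [IsBestResponseN, IsBestResponse2, Set.mem_ofPred_eq, and_imp, and_assoc] using
    setOf_maximizer_values_eq hQ1 (s := {ν | IsProbabilityMeasure ν ∧ 0 < PA_N N η Δ μ ν})
      (t := {κ | IsProbabilityMeasure κ ∧ 0 < PA_2 η Δ μ κ}) embed dominate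

theorem stmt13 {N : ℕ} (hN : 2 ≤ N) {η Δ : ℝ} (hΔ : 0 < Δ) (hη : 2 ≤ η)
    (μ : Measure ℝ) [IsProbabilityMeasure μ] (hμ : μ (Set.Icc (-Δ) Δ) = 1)
    (QAD : ℝ → ℝ → ℝ)
    (hQ1 : ∀ y : ℝ, StrictMono fun x => QAD x y) (hQ2 : ∀ x : ℝ, StrictMono (QAD x))
    (hattN : ∀ a : ℝ, 0 < a → a ≤ 1 → ∃ ν : Measure (Fin (N-1) → ℝ),
      IsProbabilityMeasure ν ∧ a ≤ PA_N N η Δ μ ν ∧ MSE_N N η Δ μ ν = cN N η Δ μ a)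
    (hatt2 : ∀ a : ℝ, 0 < a → a ≤ 1 → ∃ κ : Measure ℝ,
      IsProbabilityMeasure κ ∧ a ≤ PA_2 η Δ μ κ ∧ MSE_2 η Δ μ κ = c2 η Δ μ a)
    (hexN : ∃ ν : Measure (Fin (N-1) → ℝ), IsBestResponseN N η Δ μ QAD ν)
    (hex2 : ∃ κ : Measure ℝ, IsBestResponse2 η Δ μ QAD κ) :
    {p : ℝ × ℝ | ∃ ν : Measure (Fin (N-1) → ℝ), IsBestResponseN N η Δ μ QAD ν ∧
        p = (MSE_N N η Δ μ ν, PA_N N η Δ μ ν)} =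
      {p : ℝ × ℝ | ∃ κ : Measure ℝ, IsBestResponse2 η Δ μ QAD κ ∧
        p = (MSE_2 η Δ μ κ, PA_2 η Δ μ κ)} :=
  stmt13_general hN hΔ hη μ hμ QAD hQ1
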